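/- (Necessary conditions for S₁ to be of finite Chen type) Suppose there exist real constants λ₁, λ₂, λ₃ such that Δ(r₁) = λ₁·t, Δ(r₂) = λ₂·a(t), Δ(r₃) = λ₃·s hold for all (t,s) ∈ I × ℝ, where r₁ = t, r₂ = a(t), r₃ = s. Then necessarily λ₃ = 0 and a″(t)·(t + a(t)·a′(t)) = 0 for all t ∈ I. -/

import Mathlib

noncomputable section

/-- Partial derivative with respect to the first (t) variable. -/
def pdx (f : ℝ × ℝ → ℝ) : ℝ × ℝ → ℝ := fun p => fderiv ℝ f p (1, 0)

/-- Partial derivative with respect to the second (s) variable. -/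
def pdy (f : ℝ × ℝ → ℝ) : ℝ × ℝ → ℝ := fun p => fderiv ℝ f p (0, 1)

/-- First fundamental form coefficient `E = 1 + a′² + ¼(a − t a′)²` of the ruled surface
`S₁ : r(t,s) = (t, a(t), s)` in the Heisenberg group `H₃`. -/
def aE (a : ℝ → ℝ) (t : ℝ) : ℝ := 1 + deriv a t ^ 2 + (a t - t * deriv a t) ^ 2 / 4

/-- First fundamental form coefficient `F = ½(a − t a′)` of `S₁`. -/
def aF (a : ℝ → ℝ) (t : ℝ) : ℝ := (a t - t * deriv a t) / 2

/-- `W = √(EG − F²) = √(1 + a′²)` for `S₁` (here `G = 1`). -/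
def aW (a : ℝ → ℝ) (t : ℝ) : ℝ := Real.sqrt (1 + deriv a t ^ 2)

/-- The Laplace–Beltrami operator of `S₁ : r(t,s) = (t, a(t), s)`, with the sign convention
`Δφ = −(1/W)[∂_t((G φ_t − F φ_s)/W) + ∂_s((−F φ_t + E φ_s)/W)]`, `G = 1`. -/
def lap1 (a : ℝ → ℝ) (φ : ℝ × ℝ → ℝ) : ℝ × ℝ → ℝ := fun p =>
  -(1 / aW a p.1) *
    (pdx (fun q => (1 * pdx φ q - aF a q.1 * pdy φ q) / aW a q.1) p +
     pdy (fun q => (-(aF a q.1) * pdx φ q + aE a q.1 * pdy φ q) / aW a q.1) p)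

/-!
For the coordinate function `r₃ = s` one has `φ_t = 0` and `φ_s = 1`, hence
`Δr₃ = (1/W)·∂_t(F/W)` depends on `t` alone and `Δr₃ = λ₃ s` for every `s` forces `λ₃ = 0`.
With `F′ = -t a″/2` and `W W′ = a′ a″` one finds `Δr₃ = -a″(t + a a′)/(2W⁴)`, which must then
vanish.
-/

lemma pdx_comp_fst (f : ℝ → ℝ) (p : ℝ × ℝ) (hf : DifferentiableAt ℝ f p.1) :
    pdx (fun q => f q.1) p = deriv f p.1 := by
  rw [pdx, show (fun q : ℝ × ℝ => f q.1) = f ∘ Prod.fst from rfl,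
    fderiv_comp p hf differentiableAt_fst, fderiv_fst]
  simp only [ContinuousLinearMap.comp_apply, ContinuousLinearMap.coe_fst']
  exact fderiv_apply_one_eq_deriv

lemma pdy_comp_fst (f : ℝ → ℝ) (p : ℝ × ℝ) (hf : DifferentiableAt ℝ f p.1) :
    pdy (fun q => f q.1) p = 0 := by
  rw [pdy, show (fun q : ℝ × ℝ => f q.1) = f ∘ Prod.fst from rfl,
    fderiv_comp p hf differentiableAt_fst, fderiv_fst]
  simp

lemma pdx_snd (p : ℝ × ℝ) : pdx (fun q : ℝ × ℝ => q.2) p = 0 := by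
  simp [pdx, fderiv_snd]

lemma pdy_snd (p : ℝ × ℝ) : pdy (fun q : ℝ × ℝ => q.2) p = 1 := by
  simp [pdy, fderiv_snd]

section FirstFundamentalForm

lemma one_add_deriv_sq_pos (a : ℝ → ℝ) (t : ℝ) : 0 < 1 + deriv a t ^ 2 := by
  positivity

lemma aW_pos (a : ℝ → ℝ) (t : ℝ) : 0 < aW a t :=
  Real.sqrt_pos.mpr (one_add_deriv_sq_pos a t)

lemma aW_sq (a : ℝ → ℝ) (t : ℝ) : aW a t ^ 2 = 1 + deriv a t ^ 2 :=
  Real.sq_sqrt (one_add_deriv_sq_pos a t).le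

variable {a : ℝ → ℝ} {t : ℝ} (ha : DifferentiableAt ℝ a t) (ha' : DifferentiableAt ℝ (deriv a) t)
include ha ha'

lemma hasDerivAt_aF : HasDerivAt (aF a) (-(t * deriv (deriv a) t) / 2) t :=
  ((ha.hasDerivAt.sub (hasDerivAt_id' t |>.mul ha'.hasDerivAt)).div_const 2).congr_deriv
    (by ring)

omit ha in
lemma hasDerivAt_aW : HasDerivAt (aW a) (deriv a t * deriv (deriv a) t / aW a t) t := by
  refine (((ha'.hasDerivAt.fun_pow 2).const_add 1).sqrt
    (one_add_deriv_sq_pos a t).ne').congr_deriv ?_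
  rw [← aW]
  field_simp
  ring

lemma differentiableAt_aE : DifferentiableAt ℝ (aE a) t := by
  unfold aE
  fun_prop

lemma hasDerivAt_aF_div_aW :
    HasDerivAt (fun u => aF a u / aW a u)
      (-(deriv (deriv a) t * (t + a t * deriv a t)) / (2 * aW a t ^ 3)) t := by
  have hW := (aW_pos a t).ne'
  refine ((hasDerivAt_aF ha ha').fun_div (hasDerivAt_aW ha') hW).congr_deriv ?_
  rw [aF]
  field_simp
  linear_combination (-(t * deriv (deriv a) t)) * aW_sq a t

lemma lap1_snd_apply (s : ℝ) :
    lap1 a (fun q => q.2) (t, s) =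
      -(deriv (deriv a) t * (t + a t * deriv a t)) / (2 * (1 + deriv a t ^ 2) ^ 2) := by
  have hg := hasDerivAt_aF_div_aW ha ha'
  have hk : DifferentiableAt ℝ (fun u => aE a u / aW a u) t :=
    (differentiableAt_aE ha ha').div (hasDerivAt_aW ha').differentiableAt (aW_pos a t).ne'
  simp only [lap1, pdx_snd, pdy_snd, mul_zero, mul_one, zero_sub, zero_add, neg_div]
  rw [pdx_comp_fst (fun u => -(aF a u / aW a u)) (t, s) hg.differentiableAt.neg,
    pdy_comp_fst _ (t, s) hk, deriv.fun_neg, hg.deriv, ← aW_sq a t]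
  have hW := (aW_pos a t).ne'
  field_simp
  ring

end FirstFundamentalForm

theorem finite_type_S1_necessary_general
    (I : Set ℝ) (hI : IsOpen I) (hIne : I.Nonempty)
    (a : ℝ → ℝ) (ha : ContDiffOn ℝ (⊤ : ℕ∞) a I)
    (l3 : ℝ)
    (h3 : ∀ t ∈ I, ∀ s : ℝ, lap1 a (fun q => q.2) (t, s) = l3 * s) :
    l3 = 0 ∧ ∀ t ∈ I, deriv (deriv a) t * (t + a t * deriv a t) = 0 := by
  have ha' : ContDiffOn ℝ (⊤ : ℕ∞) (deriv a) I := ha.deriv_of_isOpen hI le_rfl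
  have hlap : ∀ t ∈ I, ∀ s, lap1 a (fun q => q.2) (t, s) =
      -(deriv (deriv a) t * (t + a t * deriv a t)) / (2 * (1 + deriv a t ^ 2) ^ 2) :=
    fun t ht => lap1_snd_apply ((ha.contDiffAt (hI.mem_nhds ht)).differentiableAt (by simp))
      ((ha'.contDiffAt (hI.mem_nhds ht)).differentiableAt (by simp))
  have hl3 : l3 = 0 := by
    obtain ⟨t, ht⟩ := hIne
    have h0 := h3 t ht 0
    have h1 := h3 t ht 1
    rw [hlap t ht] at h0 h1
    linarith
  refine ⟨hl3, fun t ht => ?_⟩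
  have h0 := h3 t ht 0
  rw [hlap t ht, hl3, zero_mul, div_eq_zero_iff, neg_eq_zero] at h0
  exact h0.resolve_right (by positivity)

/-- **Necessary conditions for `S₁` to be of finite Chen type**: if there are constants
`λ₁, λ₂, λ₃` with `Δr₁ = λ₁·t`, `Δr₂ = λ₂·a(t)`, `Δr₃ = λ₃·s` on `I × ℝ`, then `λ₃ = 0`
and `a″(t)(t + a(t)a′(t)) = 0` for all `t ∈ I`. -/
theorem finite_type_S1_necessary
    (I : Set ℝ) (hI : IsOpen I) (hIne : I.Nonempty) (hIconn : I.OrdConnected)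
    (a : ℝ → ℝ) (ha : ContDiffOn ℝ (⊤ : ℕ∞) a I)
    (l1 l2 l3 : ℝ)
    (h1 : ∀ t ∈ I, ∀ s : ℝ, lap1 a (fun q => q.1) (t, s) = l1 * t)
    (h2 : ∀ t ∈ I, ∀ s : ℝ, lap1 a (fun q => a q.1) (t, s) = l2 * a t)
    (h3 : ∀ t ∈ I, ∀ s : ℝ, lap1 a (fun q => q.2) (t, s) = l3 * s) :
    l3 = 0 ∧ ∀ t ∈ I, deriv (deriv a) t * (t + a t * deriv a t) = 0 :=
  finite_type_S1_necessary_general I hI hIne a ha l3 h3
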